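/- Let n ≥ 1, let w be a canonical word over the alphabet A = {a_1, …, a_n}, and let u, v_1, v_2 be words over {a_2, a_3, …, a_n} (i.e. not containing the letter a_1). If the word v_1 a_1 v_2 is canonical and φ(w u) = φ(v_1 a_1 v_2), then there exists a word v' over {a_2, a_3, …, a_n} such that w = v_1 a_1 v'. -/

import Mathlib

namespace Kiselman

/-- The defining relations of Kiselman's semigroup on the free monoid over `Fin n`,
where the index `i : Fin n` represents the generator `a_{i+1}` (so letters are 0-based). -/
def Rel (n : ℕ) : FreeMonoid (Fin n) → FreeMonoid (Fin n) → Prop := fun u v =>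
  (∃ i : Fin n, u = .of i * .of i ∧ v = .of i) ∨
  (∃ i j : Fin n, j < i ∧
    ((u = .of i * .of j * .of i ∧ v = .of i * .of j) ∨
     (u = .of j * .of i * .of j ∧ v = .of i * .of j)))

/-- Kiselman's semigroup (monoid) `K n`, presented by the relations `Rel n`. -/
def K (n : ℕ) : Type := (conGen (Rel n)).Quotient

instance (n : ℕ) : Monoid (K n) := inferInstanceAs (Monoid (conGen (Rel n)).Quotient)

/-- The canonical epimorphism `φ` from the free monoid onto `K n`. -/
def phi (n : ℕ) : FreeMonoid (Fin n) →* K n := Con.mk' _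

/-- `φ` applied to a word given as a list of (0-based) letters. -/
def phiL (n : ℕ) (w : List (Fin n)) : K n := phi n (FreeMonoid.ofList w)

/-- The generator `a_{i+1}` of `K n` (`i` is the 0-based index). -/
def gen {n : ℕ} (i : Fin n) : K n := phi n (FreeMonoid.of i)

/-- The word `a_hi a_{hi-1} ⋯ a_lo` (letters named 1-based), as a list of 0-based indices:
`[hi-1, hi-2, …, lo-1]` (capped at `n`). -/
def descList (n lo hi : ℕ) : List (Fin n) :=
  ((List.finRange n).filter (fun k => decide (lo ≤ k.val + 1 ∧ k.val + 1 ≤ hi))).reverse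

/-- The zero element `f = a_n a_{n-1} ⋯ a_2 a_1` of `K n`. -/
def fEl (n : ℕ) : K n := phiL n (descList n 1 n)

/-- A word `w` is canonical if for every factorization `w = p ++ [i] ++ u ++ [i] ++ q`
there are letters `j > i` and `k < i` occurring in `u`. -/
def Canonical {n : ℕ} (w : List (Fin n)) : Prop :=
  ∀ (p u q : List (Fin n)) (i : Fin n),
    w = p ++ [i] ++ u ++ [i] ++ q →
    (∃ j ∈ u, i < j) ∧ (∃ k ∈ u, k < i)

/-- The submonoid of `K n` generated by `{a_2, a_3, …, a_n}`. -/
def upper (n : ℕ) : Submonoid (K n) := Submonoid.closure (gen '' {i : Fin n | i.val ≠ 0})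

/-- The submonoid of `K n` generated by `{a_1, a_2, …, a_{n-1}}`. -/
def lower (n : ℕ) : Submonoid (K n) := Submonoid.closure (gen '' {i : Fin n | i.val + 1 ≠ n})

/-- `m(x) = min { i ∈ {0,…,n} : x ⬝ (a_i a_{i-1} ⋯ a_1) = f }`. -/
noncomputable def mIdx {n : ℕ} (x : K n) : ℕ :=
  sInf {i : ℕ | x * phiL n (descList n 1 i) = fEl n}

section Aux
variable {n : ℕ}


theorem phi_con_iff {x y : FreeMonoid (Fin n)} : phi n x = phi n y ↔ conGen (Rel n) x y :=
  Con.eq _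

theorem phiL_append (a b : List (Fin n)) : phiL n (a ++ b) = phiL n a * phiL n b := by
  unfold phiL
  rw [FreeMonoid.ofList_append, map_mul]

theorem phiL_cons (a : Fin n) (l : List (Fin n)) : phiL n (a :: l) = gen a * phiL n l := by
  have h : a :: l = [a] ++ l := rfl
  rw [h, phiL_append]; rfl

theorem phiL_nil : phiL n ([] : List (Fin n)) = 1 := map_one _

theorem phiL_singleton (a : Fin n) : phiL n [a] = gen a := rfl

theorem gen_mul_self (i : Fin n) : gen i * gen i = gen i := by
  have h : conGen (Rel n) (.of i * .of i) (.of i) :=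
    ConGen.Rel.of _ _ (Or.inl ⟨i, rfl, rfl⟩)
  have := phi_con_iff.2 h
  simpa [map_mul, gen] using this

theorem gen_rel2 {i j : Fin n} (h : j < i) : gen i * gen j * gen i = gen i * gen j := by
  have h' : conGen (Rel n) (.of i * .of j * .of i) (.of i * .of j) :=
    ConGen.Rel.of _ _ (Or.inr ⟨i, j, h, Or.inl ⟨rfl, rfl⟩⟩)
  have := phi_con_iff.2 h'
  simpa [map_mul, gen] using this

theorem gen_rel3 {i j : Fin n} (h : j < i) : gen j * gen i * gen j = gen i * gen j := by
  have h' : conGen (Rel n) (.of j * .of i * .of j) (.of i * .of j) :=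
    ConGen.Rel.of _ _ (Or.inr ⟨i, j, h, Or.inr ⟨rfl, rfl⟩⟩)
  have := phi_con_iff.2 h'
  simpa [map_mul, gen] using this

/-- absorption from the right: if all letters of `S` are `< i` then `(i S) i = i S`. -/
theorem absorb_low {i : Fin n} :
    ∀ S : List (Fin n), (∀ j ∈ S, j < i) → phiL n (i :: S) * gen i = phiL n (i :: S) := by
  intro S
  induction S using List.reverseRecOn with
  | nil => intro _; simpa [phiL_cons, phiL_nil] using gen_mul_self i
  | append_singleton S k ih =>
    intro hS
    have hk : k < i := hS k (by simp)
    have ihS : phiL n (i :: S) * gen i = phiL n (i :: S) :=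
      ih (fun j hj => hS j (by simp [hj]))
    have h1 : phiL n (i :: (S ++ [k])) = phiL n (i :: S) * gen k := by
      rw [show i :: (S ++ [k]) = (i :: S) ++ [k] by simp, phiL_append, phiL_singleton]
    rw [h1]
    calc phiL n (i :: S) * gen k * gen i
        = phiL n (i :: S) * gen i * gen k * gen i := by rw [ihS]
      _ = phiL n (i :: S) * (gen i * gen k * gen i) := by simp [mul_assoc]
      _ = phiL n (i :: S) * (gen i * gen k) := by rw [gen_rel2 hk]
      _ = phiL n (i :: S) * gen i * gen k := by simp [mul_assoc]
      _ = phiL n (i :: S) * gen k := by rw [ihS]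

/-- absorption from the left: if all letters of `S` are `> i` then `i (S i) = S i`. -/
theorem absorb_high {i : Fin n} :
    ∀ S : List (Fin n), (∀ j ∈ S, i < j) → gen i * phiL n (S ++ [i]) = phiL n (S ++ [i]) := by
  intro S
  induction S with
  | nil => simpa [phiL_cons, phiL_nil, phiL_singleton] using gen_mul_self i
  | cons m S₂ ih =>
    intro hS
    have hm : i < m := hS m (by simp)
    have ihS : gen i * phiL n (S₂ ++ [i]) = phiL n (S₂ ++ [i]) :=
      ih (fun j hj => hS j (by simp [hj]))
    have h1 : phiL n ((m :: S₂) ++ [i]) = gen m * phiL n (S₂ ++ [i]) := by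
      rw [show (m :: S₂) ++ [i] = m :: (S₂ ++ [i]) by simp, phiL_cons]
    rw [h1]
    calc gen i * (gen m * phiL n (S₂ ++ [i]))
        = gen i * (gen m * (gen i * phiL n (S₂ ++ [i]))) := by rw [ihS]
      _ = (gen i * gen m * gen i) * phiL n (S₂ ++ [i]) := by simp [mul_assoc]
      _ = (gen m * gen i) * phiL n (S₂ ++ [i]) := by rw [gen_rel3 hm]
      _ = gen m * (gen i * phiL n (S₂ ++ [i])) := by simp [mul_assoc]
      _ = gen m * phiL n (S₂ ++ [i]) := by rw [ihS]



/-- segment of `w` strictly between positions `m` and `k`. -/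
def seg (w : List (Fin n)) (m k : ℕ) : List (Fin n) := (w.drop (m+1)).take (k-m-1)

def RedL (w : List (Fin n)) (m k : ℕ) : Prop :=
  ∃ (hm : m < w.length) (hk : k < w.length), m < k ∧ w[m] = w[k] ∧
    ∀ (t : ℕ) (ht : t < w.length), m < t → t < k → w[t] < w[k]

def RedH (w : List (Fin n)) (m k : ℕ) : Prop :=
  ∃ (hm : m < w.length) (hk : k < w.length), m < k ∧ w[m] = w[k] ∧
    ∀ (t : ℕ) (ht : t < w.length), m < t → t < k → w[k] < w[t]

def DelAt (w : List (Fin n)) (d : ℕ) : Prop :=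
  (∃ m, RedL w m d) ∨ (∃ k, RedH w d k)

def Step (w w' : List (Fin n)) : Prop := ∃ d, DelAt w d ∧ w' = w.eraseIdx d

theorem take_decomp {w : List (Fin n)} {m k : ℕ} (hm : m < w.length) (hmk : m < k) :
    w.take k = w.take m ++ w[m] :: seg w m k := by
  have h : k = m + (1 + (k - m - 1)) := by omega
  conv_lhs => rw [h, List.take_add]
  congr 1
  rw [List.drop_eq_getElem_cons hm]
  rw [show 1 + (k-m-1) = (k-m-1) + 1 by omega, List.take_succ_cons]
  rfl

theorem drop_decomp {w : List (Fin n)} {m k : ℕ} (hmk : m < k) :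
    w.drop (m+1) = seg w m k ++ w.drop k := by
  conv_lhs => rw [← List.take_append_drop (k-m-1) (w.drop (m+1))]
  rw [List.drop_drop]
  congr 2
  omega

theorem decomp₀ (w : List (Fin n)) {m k : ℕ} (hm : m < w.length) (hk : k < w.length)
    (hmk : m < k) :
    w = w.take m ++ w[m] :: seg w m k ++ w[k] :: w.drop (k+1) := by
  conv_lhs => rw [← List.take_append_drop k w]
  rw [take_decomp hm hmk, List.drop_eq_getElem_cons hk]

theorem decompL (w : List (Fin n)) {m k : ℕ} (hm : m < w.length) (hk : k < w.length)
    (hmk : m < k) :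
    w.eraseIdx k = w.take m ++ w[m] :: seg w m k ++ w.drop (k+1) := by
  rw [List.eraseIdx_eq_take_drop_succ, take_decomp hm hmk]

theorem decompH (w : List (Fin n)) {m k : ℕ} (hm : m < w.length) (hk : k < w.length)
    (hmk : m < k) :
    w.eraseIdx m = w.take m ++ seg w m k ++ w[k] :: w.drop (k+1) := by
  rw [List.eraseIdx_eq_take_drop_succ, drop_decomp hmk, List.drop_eq_getElem_cons hk]
  simp

theorem mem_seg {w : List (Fin n)} {m k : ℕ} (hk : k < w.length) {x : Fin n}
    (hx : x ∈ seg w m k) : ∃ (t : ℕ) (ht : t < w.length), m < t ∧ t < k ∧ w[t] = x := by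
  obtain ⟨j, hj, hjx⟩ := List.mem_iff_getElem.1 hx
  have hj' : j < k - m - 1 ∧ m + 1 + j < w.length := by
    constructor
    · simpa [seg] using (lt_of_lt_of_le hj (by simp [seg]))
    · have := hj
      simp [seg] at this
      omega
  refine ⟨m + 1 + j, hj'.2, by omega, by omega, ?_⟩
  rw [← hjx]
  have hidx : m + 1 + j = m + 1 + j := rfl
  simp only [seg, List.getElem_take, List.getElem_drop]

theorem getElem_mem_seg {w : List (Fin n)} {m k t : ℕ} (ht : t < w.length)
    (h1 : m < t) (h2 : t < k) : w[t] ∈ seg w m k := by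
  rw [List.mem_iff_getElem]
  refine ⟨t - m - 1, ?_, ?_⟩
  · simp [seg]
    omega
  · have hidx : m + 1 + (t - m - 1) = t := by omega
    simp only [seg, List.getElem_take, List.getElem_drop, hidx]



theorem getElem_shift (x w : List (Fin n)) (t : ℕ) (ht : t < w.length)
    (H : x.length + t < (x ++ w).length) : (x ++ w)[x.length + t]'H = w[t] := by
  rw [List.getElem_append_right (by omega)]
  congr 1
  omega

theorem step_append_left (x : List (Fin n)) {w w' : List (Fin n)} (h : Step w w') :
    Step (x ++ w) (x ++ w') := by
  obtain ⟨d, hdel, rfl⟩ := h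
  have herase : (x ++ w).eraseIdx (x.length + d) = x ++ w.eraseIdx d := by
    rw [List.eraseIdx_append_of_length_le (by omega)]
    congr 1
    congr 1
    omega
  refine ⟨x.length + d, ?_, herase.symm⟩
  rcases hdel with ⟨m, hm, hk, hmk, heq, hbet⟩ | ⟨k, hm, hk, hmk, heq, hbet⟩
  · refine Or.inl ⟨x.length + m, by simp; omega, by simp; omega, by omega, ?_, ?_⟩
    · rw [getElem_shift x w m hm, getElem_shift x w d hk, heq]
    · intro t ht h1 h2
      have ht' : t - x.length < w.length := by simp at ht; omega
      have h3 : t = x.length + (t - x.length) := by omega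
      rw [getElem_shift x w d hk]
      have : (x ++ w)[t]'ht = w[t - x.length]'ht' := by
        rw [List.getElem_append_right (by omega)]
      rw [this]
      exact hbet _ _ (by omega) (by omega)
  · refine Or.inr ⟨x.length + k, by simp; omega, by simp; omega, by omega, ?_, ?_⟩
    · rw [getElem_shift x w d hm, getElem_shift x w k hk, heq]
    · intro t ht h1 h2
      have ht' : t - x.length < w.length := by simp at ht; omega
      rw [getElem_shift x w k hk]
      have : (x ++ w)[t]'ht = w[t - x.length]'ht' := by
        rw [List.getElem_append_right (by omega)]
      rw [this]
      exact hbet _ _ (by omega) (by omega)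

theorem step_append_right {w w' : List (Fin n)} (h : Step w w') (y : List (Fin n)) :
    Step (w ++ y) (w' ++ y) := by
  obtain ⟨d, hdel, rfl⟩ := h
  have hdlen : d < w.length := by
    rcases hdel with ⟨m, _, hk, _⟩ | ⟨k, hm, _⟩
    · exact hk
    · exact hm
  have herase : (w ++ y).eraseIdx d = w.eraseIdx d ++ y :=
    List.eraseIdx_append_of_lt_length hdlen y
  refine ⟨d, ?_, herase.symm⟩
  rcases hdel with ⟨m, hm, hk, hmk, heq, hbet⟩ | ⟨k, hm, hk, hmk, heq, hbet⟩
  · refine Or.inl ⟨m, by simp; omega, by simp; omega, hmk, ?_, ?_⟩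
    · rw [List.getElem_append_left hm, List.getElem_append_left hk, heq]
    · intro t ht h1 h2
      rw [List.getElem_append_left hk, List.getElem_append_left (by omega : t < w.length)]
      exact hbet _ _ h1 h2
  · refine Or.inr ⟨k, by simp; omega, by simp; omega, hmk, ?_, ?_⟩
    · rw [List.getElem_append_left hm, List.getElem_append_left hk, heq]
    · intro t ht h1 h2
      rw [List.getElem_append_left hk, List.getElem_append_left (by omega : t < w.length)]
      exact hbet _ _ h1 h2


theorem step_phi {w w' : List (Fin n)} (h : Step w w') : phiL n w = phiL n w' := by
  obtain ⟨d, hdel, rfl⟩ := h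
  rcases hdel with ⟨m, hm, hk, hmk, heq, hbet⟩ | ⟨k, hm, hk, hmk, heq, hbet⟩
  · have hS : ∀ j ∈ seg w m d, j < w[m] := by
      intro j hj
      obtain ⟨t, ht, h1, h2, rfl⟩ := mem_seg hk hj
      rw [heq]
      exact hbet t ht h1 h2
    have habs := absorb_low (i := w[m]'hm) (seg w m d) hS
    rw [phiL_cons] at habs
    rw [decompL w hm hk hmk]
    conv_lhs => rw [decomp₀ w hm hk hmk]
    simp only [phiL_append, phiL_cons]
    rw [← heq]
    calc phiL n (w.take m) * (gen w[m] * phiL n (seg w m d)) * (gen w[m] * phiL n (w.drop (d+1)))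
        = phiL n (w.take m) * ((gen w[m] * phiL n (seg w m d)) * gen w[m]) * phiL n (w.drop (d+1)) := by
          simp [mul_assoc]
      _ = phiL n (w.take m) * (gen w[m] * phiL n (seg w m d)) * phiL n (w.drop (d+1)) := by
          rw [habs]
  · have hS : ∀ j ∈ seg w d k, w[d] < j := by
      intro j hj
      obtain ⟨t, ht, h1, h2, rfl⟩ := mem_seg hk hj
      rw [heq]
      exact hbet t ht h1 h2
    have habs := absorb_high (i := w[d]'hm) (seg w d k) hS
    rw [phiL_append, phiL_singleton] at habs
    rw [decompH w hm hk hmk]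
    conv_lhs => rw [decomp₀ w hm hk hmk]
    simp only [phiL_append, phiL_cons]
    rw [← heq]
    calc phiL n (w.take d) * (gen w[d] * phiL n (seg w d k)) * (gen w[d] * phiL n (w.drop (k+1)))
        = phiL n (w.take d) * ((gen w[d] * (phiL n (seg w d k) * gen w[d])) * phiL n (w.drop (k+1))) := by
          simp [mul_assoc]
      _ = phiL n (w.take d) * ((phiL n (seg w d k) * gen w[d]) * phiL n (w.drop (k+1))) := by
          rw [habs]
      _ = phiL n (w.take d) * phiL n (seg w d k) * (gen w[d] * phiL n (w.drop (k+1))) := by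
          simp [mul_assoc]

theorem eqvgen_step_append_right {w w' : List (Fin n)}
    (h : Relation.EqvGen Step w w') (y : List (Fin n)) :
    Relation.EqvGen Step (w ++ y) (w' ++ y) := by
  induction h with
  | rel a b hab => exact .rel _ _ (step_append_right hab y)
  | refl a => exact .refl _
  | symm a b _ ih => exact .symm _ _ ih
  | trans a b c _ _ ih1 ih2 => exact .trans _ _ _ ih1 ih2

theorem eqvgen_step_append_left (x : List (Fin n)) {w w' : List (Fin n)}
    (h : Relation.EqvGen Step w w') :
    Relation.EqvGen Step (x ++ w) (x ++ w') := by
  induction h with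
  | rel a b hab => exact .rel _ _ (step_append_left x hab)
  | refl a => exact .refl _
  | symm a b _ ih => exact .symm _ _ ih
  | trans a b c _ _ ih1 ih2 => exact .trans _ _ _ ih1 ih2

def stepCon (n : ℕ) : Con (FreeMonoid (Fin n)) where
  r x y := Relation.EqvGen Step x.toList y.toList
  iseqv := ⟨fun _ => .refl _, fun h => .symm _ _ h, fun h1 h2 => .trans _ _ _ h1 h2⟩
  mul' := by
    intro a b c d h1 h2
    have h1' := eqvgen_step_append_right h1 c.toList
    have h2' := eqvgen_step_append_left b.toList h2
    have := Relation.EqvGen.trans _ _ _ h1' h2'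
    simpa [FreeMonoid.toList_mul] using this

theorem rel_le_stepCon : ∀ x y, Rel n x y → (stepCon n) x y := by
  intro x y hr
  rcases hr with ⟨i, rfl, rfl⟩ | ⟨i, j, hji, (⟨rfl, rfl⟩ | ⟨rfl, rfl⟩)⟩
  · apply Relation.EqvGen.rel
    show Step [i, i] [i]
    refine ⟨1, Or.inl ⟨0, by simp, by simp, by omega, by simp, ?_⟩, rfl⟩
    intro t ht h1 h2
    exact absurd h2 (by omega)
  · apply Relation.EqvGen.rel
    show Step [i, j, i] [i, j]
    refine ⟨2, Or.inl ⟨0, by simp, by simp, by omega, by simp, ?_⟩, rfl⟩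
    intro t ht h1 h2
    have h3 : t = 1 := by omega
    subst h3
    simpa using hji
  · apply Relation.EqvGen.rel
    show Step [j, i, j] [i, j]
    refine ⟨0, Or.inr ⟨2, by simp, by simp, by omega, by simp, ?_⟩, rfl⟩
    intro t ht h1 h2
    have h3 : t = 1 := by omega
    subst h3
    simpa using hji

theorem phi_eq_iff_eqvgen {a b : List (Fin n)} :
    phiL n a = phiL n b ↔ Relation.EqvGen Step a b := by
  constructor
  · intro h
    have h1 : conGen (Rel n) (.ofList a) (.ofList b) := phi_con_iff.1 h
    exact (Con.conGen_le.2 rel_le_stepCon) h1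
  · intro h
    induction h with
    | rel a b hab => exact step_phi hab
    | refl a => rfl
    | symm a b _ ih => exact ih.symm
    | trans a b c _ _ ih1 ih2 => exact ih1.trans ih2

theorem erase_comm' : ∀ (w : List (Fin n)) (k l : ℕ), k < l →
    (w.eraseIdx l).eraseIdx k = (w.eraseIdx k).eraseIdx (l - 1) := by
  intro w
  induction w with
  | nil => intro k l _; simp
  | cons a w ih =>
    intro k l hkl
    match k, l with
    | 0, l + 1 =>
      simp [List.eraseIdx_cons_succ]
    | k + 1, l + 1 =>
      have hkl' : k < l := by omega
      have h1 : l + 1 - 1 = l := by omega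
      have h2 : l - 1 + 1 = l := by omega
      rw [List.eraseIdx_cons_succ, List.eraseIdx_cons_succ, List.eraseIdx_cons_succ, h1]
      cases l with
      | zero => omega
      | succ l' =>
        rw [List.eraseIdx_cons_succ]
        rw [ih k (l' + 1) hkl']
        simp

theorem erase_adj {w : List (Fin n)} {k : ℕ} (hk : k + 1 < w.length)
    (he : w[k]'(by omega) = w[k+1]'hk) : w.eraseIdx k = w.eraseIdx (k+1) := by
  have ht : w.take (k+1) = w.take k ++ [w[k]'(by omega)] := by
    rw [List.take_succ, List.getElem?_eq_getElem (by omega : k < w.length)]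
    simp
  rw [List.eraseIdx_eq_take_drop_succ, List.eraseIdx_eq_take_drop_succ,
      List.drop_eq_getElem_cons hk, ← he, ht, List.append_assoc]
  rfl

theorem gee_lt {w : List (Fin n)} {e j : ℕ} (hj : j < (w.eraseIdx e).length) (hje : j < e) :
    (w.eraseIdx e)[j]'hj = w[j]'(lt_of_lt_of_le hj (List.length_eraseIdx_le w e)) := by
  rw [List.getElem_eraseIdx, dif_pos hje]

theorem gee_ge {w : List (Fin n)} {e j : ℕ} (hj : j < (w.eraseIdx e).length)
    (he : e < w.length) (hje : e ≤ j) :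
    (w.eraseIdx e)[j]'hj =
      w[j+1]'(by have h2 := hj; rw [List.length_eraseIdx_of_lt he] at h2; omega) := by
  rw [List.getElem_eraseIdx, dif_neg (by omega)]

theorem redL_erase {w : List (Fin n)} {m k e : ℕ} (h : RedL w m k) (he : e < w.length)
    (hem : e ≠ m) (hek : e ≠ k) :
    RedL (w.eraseIdx e) (if m < e then m else m - 1) (if k < e then k else k - 1) := by
  obtain ⟨hm, hk, hmk, heq, hbet⟩ := h
  have hlen : (w.eraseIdx e).length = w.length - 1 := List.length_eraseIdx_of_lt he
  have hM : (if m < e then m else m - 1) < (w.eraseIdx e).length := by split_ifs <;> omega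
  have hK : (if k < e then k else k - 1) < (w.eraseIdx e).length := by split_ifs <;> omega
  have eM : (w.eraseIdx e)[if m < e then m else m - 1]'hM = w[m]'hm := by
    by_cases h1 : m < e
    · simp only [if_pos h1]
      exact gee_lt _ h1
    · simp only [if_neg h1]
      rw [gee_ge _ he (by omega)]
      have hidx : m - 1 + 1 = m := by omega
      simp only [hidx]
  have eK : (w.eraseIdx e)[if k < e then k else k - 1]'hK = w[k]'hk := by
    by_cases h1 : k < e
    · simp only [if_pos h1]
      exact gee_lt _ h1
    · simp only [if_neg h1]
      rw [gee_ge _ he (by omega)]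
      have hidx : k - 1 + 1 = k := by omega
      simp only [hidx]
  refine ⟨hM, hK, by split_ifs <;> omega, by rw [eM, eK, heq], ?_⟩
  intro t ht h1 h2
  rw [eK]
  by_cases hte : t < e
  · rw [gee_lt ht hte]
    refine hbet t _ ?_ ?_ <;> split_ifs at h1 h2 <;> omega
  · rw [gee_ge ht he (by omega)]
    refine hbet (t+1) _ ?_ ?_ <;> split_ifs at h1 h2 <;> omega

theorem redH_erase {w : List (Fin n)} {m k e : ℕ} (h : RedH w m k) (he : e < w.length)
    (hem : e ≠ m) (hek : e ≠ k) :
    RedH (w.eraseIdx e) (if m < e then m else m - 1) (if k < e then k else k - 1) := by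
  obtain ⟨hm, hk, hmk, heq, hbet⟩ := h
  have hlen : (w.eraseIdx e).length = w.length - 1 := List.length_eraseIdx_of_lt he
  have hM : (if m < e then m else m - 1) < (w.eraseIdx e).length := by split_ifs <;> omega
  have hK : (if k < e then k else k - 1) < (w.eraseIdx e).length := by split_ifs <;> omega
  have eM : (w.eraseIdx e)[if m < e then m else m - 1]'hM = w[m]'hm := by
    by_cases h1 : m < e
    · simp only [if_pos h1]
      exact gee_lt _ h1
    · simp only [if_neg h1]
      rw [gee_ge _ he (by omega)]
      have hidx : m - 1 + 1 = m := by omega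
      simp only [hidx]
  have eK : (w.eraseIdx e)[if k < e then k else k - 1]'hK = w[k]'hk := by
    by_cases h1 : k < e
    · simp only [if_pos h1]
      exact gee_lt _ h1
    · simp only [if_neg h1]
      rw [gee_ge _ he (by omega)]
      have hidx : k - 1 + 1 = k := by omega
      simp only [hidx]
  refine ⟨hM, hK, by split_ifs <;> omega, by rw [eM, eK, heq], ?_⟩
  intro t ht h1 h2
  rw [eK]
  by_cases hte : t < e
  · rw [gee_lt ht hte]
    refine hbet t _ ?_ ?_ <;> split_ifs at h1 h2 <;> omega
  · rw [gee_ge ht he (by omega)]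
    refine hbet (t+1) _ ?_ ?_ <;> split_ifs at h1 h2 <;> omega

theorem confluence_key {w : List (Fin n)} {d1 d2 : ℕ} (h1 : DelAt w d1) (h2 : DelAt w d2)
    (h12 : d1 < d2) :
    w.eraseIdx d1 = w.eraseIdx d2 ∨
      (DelAt (w.eraseIdx d1) (d2 - 1) ∧ DelAt (w.eraseIdx d2) d1) := by
  have hd2len : d2 < w.length := by
    rcases h2 with ⟨m, _, hk, _⟩ | ⟨k, hm, _⟩
    · exact hk
    · exact hm
  have hd1len : d1 < w.length := by omega
  have hlen1 : (w.eraseIdx d1).length = w.length - 1 := List.length_eraseIdx_of_lt hd1len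
  have hlen2 : (w.eraseIdx d2).length = w.length - 1 := List.length_eraseIdx_of_lt hd2len
  rcases h1 with ⟨m1, R1⟩ | ⟨k1, R1⟩ <;> rcases h2 with ⟨m2, R2⟩ | ⟨k2, R2⟩
  · -- LL
    right
    constructor
    · by_cases hm2 : m2 = d1
      · rw [hm2] at R2
        obtain ⟨hm1, hd1b, hlt1, heq1, hbet1⟩ := R1
        obtain ⟨hd1b', hd2b, hlt2, heq2, hbet2⟩ := R2
        have hb1 : m1 < (w.eraseIdx d1).length := by omega
        have hb2 : d2 - 1 < (w.eraseIdx d1).length := by omega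
        have e1 : (w.eraseIdx d1)[m1]'hb1 = w[m1]'hm1 := gee_lt hb1 hlt1
        have e2 : (w.eraseIdx d1)[d2-1]'hb2 = w[d2]'hd2b := by
          rw [gee_ge hb2 hd1len (by omega)]
          have hidx : d2 - 1 + 1 = d2 := by omega
          simp only [hidx]
        refine Or.inl ⟨m1, hb1, hb2, by omega, by rw [e1, e2, heq1, heq2], ?_⟩
        intro t ht h1t h2t
        rw [e2]
        by_cases hte : t < d1
        · rw [gee_lt ht hte]
          have := hbet1 t (by omega) (by omega) (by omega)
          rw [heq2] at this
          exact this
        · rw [gee_ge ht hd1len (by omega)]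
          exact hbet2 (t+1) (by omega) (by omega) (by omega)
      · have hgen := redL_erase R2 hd1len (fun h => hm2 h.symm) (by omega)
        rw [if_neg (show ¬ d2 < d1 by omega)] at hgen
        exact Or.inl ⟨_, hgen⟩
    · have hm1d1 : m1 < d1 := by
        obtain ⟨_, _, h, _⟩ := R1
        exact h
      have hgen := redL_erase R1 hd2len (by omega) (by omega)
      rw [if_pos (show m1 < d2 by omega), if_pos (show d1 < d2 by omega)] at hgen
      exact Or.inl ⟨m1, hgen⟩
  · -- LH
    right
    have hk2 : d2 < k2 := by
      obtain ⟨_, _, h, _⟩ := R2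
      exact h
    have hm1d1 : m1 < d1 := by
      obtain ⟨_, _, h, _⟩ := R1
      exact h
    constructor
    · have hgen := redH_erase R2 hd1len (by omega) (by omega)
      rw [if_neg (show ¬ d2 < d1 by omega), if_neg (show ¬ k2 < d1 by omega)] at hgen
      exact Or.inr ⟨k2 - 1, hgen⟩
    · have hgen := redL_erase R1 hd2len (by omega) (by omega)
      rw [if_pos (show m1 < d2 by omega), if_pos (show d1 < d2 by omega)] at hgen
      exact Or.inl ⟨m1, hgen⟩
  · -- HL
    have hk1d1 : d1 < k1 := by
      obtain ⟨_, _, h, _⟩ := R1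
      exact h
    have hm2d2 : m2 < d2 := by
      obtain ⟨_, _, h, _⟩ := R2
      exact h
    by_cases hk1 : k1 = d2
    · rw [hk1] at R1
      by_cases hm2 : m2 = d1
      · rw [hm2] at R2
        obtain ⟨hd1b, hd2b1, hlt1, heq1, hbet1⟩ := R1
        obtain ⟨hd1b', hd2b, hlt2, heq2, hbet2⟩ := R2
        have hadj : d2 = d1 + 1 := by
          by_contra hne
          have hA := hbet1 (d1+1) (by omega) (by omega) (by omega)
          have hB := hbet2 (d1+1) (by omega) (by omega) (by omega)
          exact absurd (hA.trans hB) (lt_irrefl _)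
        left
        have he' : w[d1]'hd1b = w[d1+1]'(by omega) := by
          have hx : d1 + 1 = d2 := hadj.symm
          simp only [hx]
          exact heq1
        rw [erase_adj (by omega) he', hadj]
      · exfalso
        obtain ⟨hd1b, hk1b, hlt1, heq1, hbet1⟩ := R1
        obtain ⟨hm2b, hd2b, hlt2, heq2, hbet2⟩ := R2
        rcases lt_or_gt_of_ne hm2 with hlt | hgt
        · have := hbet2 d1 (by omega) (by omega) (by omega)
          rw [heq1] at this
          exact absurd this (lt_irrefl _)
        · have := hbet1 m2 (by omega) (by omega) (by omega)
          rw [heq2] at this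
          exact absurd this (lt_irrefl _)
    · right
      constructor
      · by_cases hm2 : m2 = d1
        · exfalso
          rw [hm2] at R2
          obtain ⟨hd1b, hk1b, hlt1, heq1, hbet1⟩ := R1
          obtain ⟨hm2b, hd2b, hlt2, heq2, hbet2⟩ := R2
          rcases lt_or_gt_of_ne hk1 with hlt | hgt
          · have := hbet2 k1 (by omega) (by omega) (by omega)
            rw [← heq1, ← heq2] at this
            exact absurd this (lt_irrefl _)
          · have := hbet1 d2 (by omega) (by omega) (by omega)
            rw [← heq1, ← heq2] at this
            exact absurd this (lt_irrefl _)
        · have hgen := redL_erase R2 hd1len (fun h => hm2 h.symm) (by omega)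
          rw [if_neg (show ¬ d2 < d1 by omega)] at hgen
          exact Or.inl ⟨_, hgen⟩
      · have hgen := redH_erase R1 hd2len (by omega) (fun h => hk1 h.symm)
        rw [if_pos (show d1 < d2 by omega)] at hgen
        exact Or.inr ⟨_, hgen⟩
  · -- HH
    have hk1d1 : d1 < k1 := by
      obtain ⟨_, _, h, _⟩ := R1
      exact h
    have hk2d2 : d2 < k2 := by
      obtain ⟨_, _, h, _⟩ := R2
      exact h
    right
    constructor
    · have hgen := redH_erase R2 hd1len (by omega) (by omega)
      rw [if_neg (show ¬ d2 < d1 by omega), if_neg (show ¬ k2 < d1 by omega)] at hgen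
      exact Or.inr ⟨k2 - 1, hgen⟩
    · by_cases hk1 : k1 = d2
      · rw [hk1] at R1
        obtain ⟨hd1b, hk1b, hlt1, heq1, hbet1⟩ := R1
        obtain ⟨hd2b, hk2b, hlt2, heq2, hbet2⟩ := R2
        have hb1 : d1 < (w.eraseIdx d2).length := by omega
        have hb2 : k2 - 1 < (w.eraseIdx d2).length := by omega
        have e1 : (w.eraseIdx d2)[d1]'hb1 = w[d1]'hd1b := gee_lt hb1 hlt1
        have e2 : (w.eraseIdx d2)[k2-1]'hb2 = w[k2]'hk2b := by
          rw [gee_ge hb2 hd2len (by omega)]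
          have hidx : k2 - 1 + 1 = k2 := by omega
          simp only [hidx]
        refine Or.inr ⟨k2 - 1, hb1, hb2, by omega, by rw [e1, e2, heq1, heq2], ?_⟩
        intro t ht h1t h2t
        rw [e2]
        by_cases hte : t < d2
        · rw [gee_lt ht hte]
          have := hbet1 t (by omega) (by omega) (by omega)
          rw [heq2] at this
          exact this
        · rw [gee_ge ht hd2len (by omega)]
          exact hbet2 (t+1) (by omega) (by omega) (by omega)
      · have hgen := redH_erase R1 hd2len (by omega) (fun h => hk1 h.symm)
        rw [if_pos (show d1 < d2 by omega)] at hgen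
        exact Or.inr ⟨_, hgen⟩

theorem step_local_conf : ∀ (w w1 w2 : List (Fin n)), Step w w1 → Step w w2 →
    ∃ d, Relation.ReflGen Step w1 d ∧ Relation.ReflTransGen Step w2 d := by
  intro w w1 w2 h1 h2
  obtain ⟨a, ha, rfl⟩ := h1
  obtain ⟨b, hb, rfl⟩ := h2
  rcases lt_trichotomy a b with hab | rfl | hab
  · rcases confluence_key ha hb hab with heq | ⟨hA, hB⟩
    · rw [heq]
      exact ⟨w.eraseIdx b, .refl, .refl⟩
    · refine ⟨(w.eraseIdx a).eraseIdx (b-1), .single ⟨b-1, hA, rfl⟩,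
        Relation.ReflTransGen.single ⟨a, hB, (erase_comm' w a b hab).symm⟩⟩
  · exact ⟨w.eraseIdx a, .refl, .refl⟩
  · rcases confluence_key hb ha hab with heq | ⟨hA, hB⟩
    · rw [heq]
      exact ⟨w.eraseIdx a, .refl, .refl⟩
    · refine ⟨(w.eraseIdx b).eraseIdx (a-1), .single ⟨b, hB, (erase_comm' w b a hab).symm⟩,
        Relation.ReflTransGen.single ⟨a-1, hA, rfl⟩⟩

theorem eqvgen_join {a b : List (Fin n)} (h : Relation.EqvGen Step a b) :
    Relation.Join (Relation.ReflTransGen Step) a b := by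
  have hequiv := Relation.equivalence_join_reflTransGen
    (r := (Step : List (Fin n) → List (Fin n) → Prop)) step_local_conf
  induction h with
  | rel x y hxy => exact ⟨y, .single hxy, .refl⟩
  | refl x => exact hequiv.refl x
  | symm x y _ ih => exact hequiv.symm ih
  | trans x y z _ _ ih1 ih2 => exact hequiv.trans ih1 ih2

theorem no_step_of_canonical {w : List (Fin n)} (hc : Canonical w) : ∀ w', ¬ Step w w' := by
  intro w' hs
  obtain ⟨d, hdel, _⟩ := hs
  rcases hdel with ⟨m, hm, hk, hmk, heq, hbet⟩ | ⟨k, hm, hk, hmk, heq, hbet⟩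
  · have hw : w = w.take m ++ [w[d]'hk] ++ seg w m d ++ [w[d]'hk] ++ w.drop (d+1) := by
      conv_lhs => rw [decomp₀ w hm hk hmk]
      rw [heq]
      simp
    obtain ⟨⟨j, hj, hij⟩, -⟩ := hc _ _ _ _ hw
    obtain ⟨t, ht, h1, h2, rfl⟩ := mem_seg hk hj
    exact absurd (hbet t ht h1 h2) (not_lt.2 (le_of_lt hij))
  · have hw : w = w.take d ++ [w[d]'hm] ++ seg w d k ++ [w[d]'hm] ++ w.drop (k+1) := by
      conv_lhs => rw [decomp₀ w hm hk hmk]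
      rw [heq]
      simp
    obtain ⟨-, ⟨j, hj, hij⟩⟩ := hc _ _ _ _ hw
    obtain ⟨t, ht, h1, h2, rfl⟩ := mem_seg hk hj
    have := hbet t ht h1 h2
    rw [← heq] at this
    exact absurd this (not_lt.2 (le_of_lt hij))

theorem canonical_nil : Canonical ([] : List (Fin n)) := by
  intro p u q i h
  have := congrArg List.length h
  simp at this

theorem step_base_L (u q : List (Fin n)) (i : Fin n) (hu : ∀ j ∈ u, j < i) :
    Step (i :: (u ++ i :: q)) (i :: (u ++ q)) := by
  have hlen : u.length + 1 < (i :: (u ++ i :: q)).length := by simp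
  have hgetk : (i :: (u ++ i :: q))[u.length + 1]'hlen = i := by
    simp only [List.getElem_cons_succ]
    rw [List.getElem_append_right (le_refl _)]
    simp
  refine ⟨u.length + 1, Or.inl ⟨0, by simp, hlen, by omega, by simpa using hgetk.symm, ?_⟩, ?_⟩
  · intro t ht h1 h2
    rw [hgetk]
    match t, h1 with
    | t + 1, _ =>
      simp only [List.getElem_cons_succ]
      rw [List.getElem_append_left (by omega : t < u.length)]
      exact hu _ (List.getElem_mem _)
  · rw [show (u.length + 1) = (u.length) + 1 by rfl, List.eraseIdx_cons_succ]
    congr 1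
    rw [List.eraseIdx_append_of_length_le (le_refl _)]
    simp

theorem step_base_H (u q : List (Fin n)) (i : Fin n) (hu : ∀ j ∈ u, i < j) :
    Step (i :: (u ++ i :: q)) (u ++ i :: q) := by
  have hlen : u.length + 1 < (i :: (u ++ i :: q)).length := by simp
  have hgetk : (i :: (u ++ i :: q))[u.length + 1]'hlen = i := by
    simp only [List.getElem_cons_succ]
    rw [List.getElem_append_right (le_refl _)]
    simp
  refine ⟨0, Or.inr ⟨u.length + 1, by simp, hlen, by omega, by simpa using hgetk.symm, ?_⟩, rfl⟩
  intro t ht h1 h2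
  rw [hgetk]
  match t, h1 with
  | t + 1, _ =>
    simp only [List.getElem_cons_succ]
    rw [List.getElem_append_left (by omega : t < u.length)]
    exact hu _ (List.getElem_mem _)

theorem shape_eq (p u q : List (Fin n)) (i : Fin n) :
    p ++ [i] ++ u ++ [i] ++ q = p ++ (i :: (u ++ i :: q)) := by
  simp

theorem exists_step_aux : ∀ (N : ℕ) (u p q : List (Fin n)) (i : Fin n), u.length ≤ N →
    ((∀ j ∈ u, ¬ i < j) ∨ (∀ j ∈ u, ¬ j < i)) →
    ∃ w', Step (p ++ [i] ++ u ++ [i] ++ q) w' := by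
  intro N
  induction N with
  | zero =>
    intro u p q i hlen _
    have hu : u = [] := List.length_eq_zero_iff.1 (by omega)
    subst hu
    refine ⟨p ++ (i :: ([] ++ q)), ?_⟩
    rw [shape_eq]
    exact step_append_left p (step_base_L [] q i (by simp))
  | succ N ih =>
    intro u p q i hlen hcond
    by_cases hi : i ∈ u
    · obtain ⟨u1, u2, rfl⟩ := List.append_of_mem hi
      have hcond1 : (∀ j ∈ u1, ¬ i < j) ∨ (∀ j ∈ u1, ¬ j < i) := by
        rcases hcond with h | h
        · exact Or.inl (fun j hj => h j (by simp [hj]))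
        · exact Or.inr (fun j hj => h j (by simp [hj]))
      have hlen1 : u1.length ≤ N := by
        have := hlen
        simp at this
        omega
      obtain ⟨w', hw'⟩ := ih u1 p (u2 ++ [i] ++ q) i hlen1 hcond1
      refine ⟨w', ?_⟩
      have hsh : p ++ [i] ++ u1 ++ [i] ++ (u2 ++ [i] ++ q) =
          p ++ [i] ++ (u1 ++ i :: u2) ++ [i] ++ q := by simp
      rwa [hsh] at hw'
    · rcases hcond with hbig | hsmall
      · have hall : ∀ j ∈ u, j < i := by
          intro j hj
          rcases lt_trichotomy j i with h | h | h
          · exact h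
          · exact absurd (h ▸ hj) hi
          · exact absurd h (hbig j hj)
        refine ⟨p ++ (i :: (u ++ q)), ?_⟩
        rw [shape_eq]
        exact step_append_left p (step_base_L u q i hall)
      · have hall : ∀ j ∈ u, i < j := by
          intro j hj
          rcases lt_trichotomy j i with h | h | h
          · exact absurd h (hsmall j hj)
          · exact absurd (h ▸ hj) hi
          · exact h
        refine ⟨p ++ (u ++ i :: q), ?_⟩
        rw [shape_eq]
        exact step_append_left p (step_base_H u q i hall)

theorem step_of_not_canonical {w : List (Fin n)} (hnc : ¬ Canonical w) : ∃ w', Step w w' := by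
  by_contra hno
  push_neg at hno
  apply hnc
  intro p u q i hw
  constructor
  · by_contra hA
    obtain ⟨w', hw'⟩ := exists_step_aux u.length u p q i le_rfl
      (Or.inl (fun j hj hij => hA ⟨j, hj, hij⟩))
    exact hno w' (by rw [hw]; exact hw')
  · by_contra hB
    obtain ⟨w', hw'⟩ := exists_step_aux u.length u p q i le_rfl
      (Or.inr (fun j hj hji => hB ⟨j, hj, hji⟩))
    exact hno w' (by rw [hw]; exact hw')

theorem delAt_lt_length {w : List (Fin n)} {d : ℕ} (h : DelAt w d) : d < w.length := by
  rcases h with ⟨m, _, hk, _⟩ | ⟨k, hm, _⟩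
  · exact hk
  · exact hm

theorem reduce_to_canonical : ∀ (N : ℕ) (y : List (Fin n)), y.length ≤ N →
    ∃ z, Relation.ReflTransGen Step y z ∧ Canonical z ∧ (∀ x ∈ z, x ∈ y) := by
  intro N
  induction N with
  | zero =>
    intro y hlen
    have : y = [] := List.length_eq_zero_iff.1 (by omega)
    subst this
    exact ⟨[], .refl, canonical_nil, fun x hx => hx⟩
  | succ N ih =>
    intro y hlen
    by_cases hc : Canonical y
    · exact ⟨y, .refl, hc, fun x hx => hx⟩
    · obtain ⟨y', hy'⟩ := step_of_not_canonical hc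
      have hy'' := hy'
      obtain ⟨d, hdel, hee⟩ := hy'
      have hd : d < y.length := delAt_lt_length hdel
      have hlen' : y'.length ≤ N := by
        rw [hee, List.length_eraseIdx_of_lt hd]
        omega
      obtain ⟨z, hrtg, hzc, hzm⟩ := ih y' hlen'
      refine ⟨z, Relation.ReflTransGen.head hy'' hrtg, hzc, fun x hx => ?_⟩
      have := hzm x hx
      rw [hee] at this
      exact List.mem_of_mem_eraseIdx this

theorem canonical_prefix {a b : List (Fin n)} (h : Canonical (a ++ b)) : Canonical a := by
  intro p u q i hp
  exact h p u (q ++ b) i (by rw [hp]; simp)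

theorem rtg_eq_of_canonical {a c : List (Fin n)} (ha : Canonical a)
    (h : Relation.ReflTransGen Step a c) : a = c := by
  rcases Relation.ReflTransGen.cases_head h with rfl | ⟨b, hab, _⟩
  · rfl
  · exact absurd hab (no_step_of_canonical ha b)

theorem rtg_eqvgen {a b : List (Fin n)} (h : Relation.ReflTransGen Step a b) :
    Relation.EqvGen Step a b := by
  induction h with
  | refl => exact .refl _
  | tail _ h2 ih => exact .trans _ _ _ ih (.rel _ _ h2)

theorem canonical_unique {a b : List (Fin n)} (ha : Canonical a) (hb : Canonical b)
    (h : Relation.EqvGen Step a b) : a = b := by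
  obtain ⟨c, h1, h2⟩ := eqvgen_join h
  rw [rtg_eq_of_canonical ha h1, rtg_eq_of_canonical hb h2]

theorem split_first {l : List (Fin n)} {a : Fin n} (h : a ∈ l) :
    ∃ s t, l = s ++ a :: t ∧ a ∉ s := by
  induction l with
  | nil => simp at h
  | cons b l ih =>
    by_cases hba : b = a
    · exact ⟨[], l, by rw [hba]; rfl, by simp⟩
    · have hal : a ∈ l := by
        rcases List.mem_cons.1 h with h' | h'
        · exact absurd h'.symm hba
        · exact h'
      obtain ⟨s, t, rfl, hns⟩ := ih hal
      exact ⟨b :: s, t, rfl, by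
        simp only [List.mem_cons, not_or]
        exact ⟨fun h' => hba h'.symm, hns⟩⟩

theorem unique_split {a : Fin n} : ∀ {s s' t t' : List (Fin n)},
    s ++ a :: t = s' ++ a :: t' → a ∉ s → a ∉ s' → s = s' ∧ t = t' := by
  intro s
  induction s with
  | nil =>
    intro s' t t' h hs hs'
    cases s' with
    | nil => simpa using h
    | cons c s' =>
      exfalso
      simp only [List.nil_append, List.cons_append, List.cons.injEq] at h
      exact hs' (by rw [h.1]; exact List.mem_cons_self)
  | cons b s ih =>
    intro s' t t' h hs hs'
    cases s' with
    | nil =>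
      exfalso
      simp only [List.nil_append, List.cons_append, List.cons.injEq] at h
      exact hs (by rw [h.1]; exact List.mem_cons_self)
    | cons c s' =>
      simp only [List.cons_append, List.cons.injEq] at h
      obtain ⟨rfl, h2⟩ := h
      obtain ⟨rfl, rfl⟩ := ih h2 (fun hx => hs (by simp [hx])) (fun hx => hs' (by simp [hx]))
      exact ⟨rfl, rfl⟩

theorem step_prefix {v y : List (Fin n)} {z0 : Fin n}
    (hpre : ∀ w', ¬ Step (v ++ [z0]) w')
    (hv : ∀ x ∈ v, x ≠ z0) (hy : ∀ x ∈ y, x ≠ z0)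
    (hmin : ∀ x : Fin n, x ≠ z0 → z0 < x)
    {W' : List (Fin n)} (hs : Step (v ++ z0 :: y) W') :
    ∃ y', W' = v ++ z0 :: y' ∧ y'.length < y.length ∧ ∀ x ∈ y', x ∈ y := by
  obtain ⟨d, hdel, rfl⟩ := hs
  have hdlen : d < (v ++ z0 :: y).length := delAt_lt_length hdel
  have hlenW : (v ++ z0 :: y).length = v.length + 1 + y.length := by
    simp
    omega
  have hshare : ∀ (t : ℕ) (h1 : t < v.length + 1) (h2 : t < (v ++ z0 :: y).length)
      (h3 : t < (v ++ [z0]).length),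
      (v ++ z0 :: y)[t]'h2 = (v ++ [z0])[t]'h3 := by
    intro t h1 h2 h3
    by_cases ht : t < v.length
    · rw [List.getElem_append_left ht, List.getElem_append_left ht]
    · have hteq : t = v.length := by omega
      subst hteq
      rw [List.getElem_append_right (le_refl _), List.getElem_append_right (le_refl _)]
      simp
  have hWV : ∀ (hb : v.length < (v ++ z0 :: y).length), (v ++ z0 :: y)[v.length]'hb = z0 := by
    intro hb
    rw [List.getElem_append_right (le_refl _)]
    simp
  have hWy : ∀ (s : ℕ) (hb : v.length + 1 + s < (v ++ z0 :: y).length),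
      (v ++ z0 :: y)[v.length + 1 + s]'hb = y[s]'(by rw [hlenW] at hb; omega) := by
    intro s hb
    rw [List.getElem_append_right (by omega)]
    have hidx : v.length + 1 + s - v.length = s + 1 := by omega
    simp only [hidx, List.getElem_cons_succ]
  have hdV : v.length < d := by
    by_contra hle
    push_neg at hle
    rcases hdel with ⟨m, R⟩ | ⟨k, R⟩
    · obtain ⟨hm, hk, hmk, heq, hbet⟩ := R
      apply hpre ((v ++ [z0]).eraseIdx d)
      have hd3 : d < (v ++ [z0]).length := by simp; omega
      have hm3 : m < (v ++ [z0]).length := by simp; omega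
      refine ⟨d, Or.inl ⟨m, hm3, hd3, hmk, ?_, ?_⟩, rfl⟩
      · rw [← hshare m (by omega) hm hm3, ← hshare d (by omega) hk hd3]
        exact heq
      · intro t ht h1 h2
        rw [← hshare t (by omega) (by omega) ht, ← hshare d (by omega) hk hd3]
        exact hbet t (by omega) h1 h2
    · obtain ⟨hm, hk, hmk, heq, hbet⟩ := R
      by_cases hkV : k < v.length + 1
      · apply hpre ((v ++ [z0]).eraseIdx d)
        have hd3 : d < (v ++ [z0]).length := by simp; omega
        have hk3 : k < (v ++ [z0]).length := by simp; omega
        refine ⟨d, Or.inr ⟨k, hd3, hk3, hmk, ?_, ?_⟩, rfl⟩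
        · rw [← hshare d (by omega) hm hd3, ← hshare k (by omega) hk hk3]
          exact heq
        · intro t ht h1 h2
          rw [← hshare t (by omega) (by omega) ht, ← hshare k (by omega) hk hk3]
          exact hbet t (by omega) h1 h2
      · push_neg at hkV
        have hkval : (v ++ z0 :: y)[k]'hk = y[k - v.length - 1]'(by rw [hlenW] at hk; omega) := by
          have hidx : k = v.length + 1 + (k - v.length - 1) := by omega
          rw [show ((v ++ z0 :: y)[k]'hk) = ((v ++ z0 :: y)[v.length + 1 + (k - v.length - 1)]'(by omega)) from by simp only [← hidx]]
          rw [hWy (k - v.length - 1) (by omega)]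
      
        have hkne : (v ++ z0 :: y)[k]'hk ≠ z0 := by
          rw [hkval]
          exact hy _ (List.getElem_mem _)
        by_cases hdV' : d = v.length
        · subst hdV'
          rw [hWV hm] at heq
          exact hkne heq.symm
        · have hdv : d < v.length := by omega
          have hbV := hbet v.length (by omega) (by omega) (by omega)
          rw [hWV (by omega)] at hbV
          have hdne : (v ++ z0 :: y)[d]'hm ≠ z0 := by
            rw [List.getElem_append_left hdv]
            exact hv _ (List.getElem_mem _)
          rw [heq] at hdne
          exact absurd (hmin _ hdne) (not_lt.2 (le_of_lt hbV))
  refine ⟨y.eraseIdx (d - v.length - 1), ?_, ?_, fun x hx => List.mem_of_mem_eraseIdx hx⟩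
  · rw [List.eraseIdx_append_of_length_le (by omega : v.length ≤ d)]
    congr 1
    have hidx : d - v.length = (d - v.length - 1) + 1 := by omega
    conv_lhs => rw [hidx]
    rw [List.eraseIdx_cons_succ]
  · rw [List.length_eraseIdx_of_lt (by rw [hlenW] at hdlen; omega)]
    rw [hlenW] at hdlen
    omega

theorem reduce_tail {v : List (Fin n)} {z0 : Fin n}
    (hpre : ∀ w', ¬ Step (v ++ [z0]) w')
    (hv : ∀ x ∈ v, x ≠ z0)
    (hmin : ∀ x : Fin n, x ≠ z0 → z0 < x) :
    ∀ (N : ℕ) (y : List (Fin n)), y.length ≤ N → (∀ x ∈ y, x ≠ z0) →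
    ∃ z, Canonical (v ++ z0 :: z) ∧ (∀ x ∈ z, x ∈ y) ∧
      Relation.ReflTransGen Step (v ++ z0 :: y) (v ++ z0 :: z) := by
  intro N
  induction N with
  | zero =>
    intro y hlen hy
    have : y = [] := List.length_eq_zero_iff.1 (by omega)
    subst this
    by_cases hc : Canonical (v ++ z0 :: [])
    · exact ⟨[], hc, fun x hx => hx, .refl⟩
    · exfalso
      obtain ⟨W', hW'⟩ := step_of_not_canonical hc
      obtain ⟨y', _, hlen', _⟩ := step_prefix hpre hv hy hmin hW'
      simp at hlen'
  | succ N ih =>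
    intro y hlen hy
    by_cases hc : Canonical (v ++ z0 :: y)
    · exact ⟨y, hc, fun x hx => hx, .refl⟩
    · obtain ⟨W', hW'⟩ := step_of_not_canonical hc
      obtain ⟨y', rfl, hlen', hmem'⟩ := step_prefix hpre hv hy hmin hW'
      obtain ⟨z, hzc, hzm, hrtg⟩ := ih y' (by omega) (fun x hx => hy x (hmem' x hx))
      exact ⟨z, hzc, fun x hx => hmem' x (hzm x hx), .head hW' hrtg⟩

end Aux

/-- If `w` is canonical, `u, v₁, v₂` are words over `{a_2, …, a_n}`, `v₁ a_1 v₂` is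
canonical, and `φ(w u) = φ(v₁ a_1 v₂)`, then `w = v₁ a_1 v'` for some word `v'` over
`{a_2, …, a_n}`. -/
theorem prefix_structure (n : ℕ) (hn : 1 ≤ n) (w u v1 v2 : List (Fin n))
    (hwc : Canonical w)
    (hu0 : ∀ i ∈ u, i.val ≠ 0) (hv1 : ∀ i ∈ v1, i.val ≠ 0) (hv2 : ∀ i ∈ v2, i.val ≠ 0)
    (hc : Canonical (v1 ++ (⟨0, by omega⟩ : Fin n) :: v2))
    (h : phiL n (w ++ u) = phiL n (v1 ++ (⟨0, by omega⟩ : Fin n) :: v2)) :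
    ∃ v' : List (Fin n), (∀ i ∈ v', i.val ≠ 0) ∧
      w = v1 ++ (⟨0, by omega⟩ : Fin n) :: v' := by
  have h0n : (0:ℕ) < n := hn
  set z0 : Fin n := ⟨0, h0n⟩ with hz0def
  have hzval : z0.val = 0 := rfl
  have hmin : ∀ x : Fin n, x ≠ z0 → z0 < x := by
    intro x hx
    have hxv : x.val ≠ 0 := by
      intro hv
      exact hx (Fin.ext (by rw [hv, hzval]))
    refine Fin.lt_def.2 ?_
    rw [hzval]
    omega
  have hne_iff : ∀ i : Fin n, i.val ≠ 0 → i ≠ z0 := by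
    intro i hi hEq
    exact hi (by rw [hEq, hzval])
  have hc' : Canonical (v1 ++ z0 :: v2) := hc
  have h' : phiL n (w ++ u) = phiL n (v1 ++ z0 :: v2) := h
  have he : Relation.EqvGen Step (w ++ u) (v1 ++ z0 :: v2) := phi_eq_iff_eqvgen.1 h'
  by_cases h0 : z0 ∈ w
  · obtain ⟨v1', w2, hw, hv1'⟩ := split_first h0
    have hvne : ∀ x ∈ v1', x ≠ z0 := fun x hx hEq => hv1' (hEq ▸ hx)
    have hw2 : ∀ x ∈ w2, x ≠ z0 := by
      intro x hx hEq
      obtain ⟨w2a, w2b, hw2ab⟩ := List.append_of_mem (show z0 ∈ w2 from hEq ▸ hx)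
      obtain ⟨-, ⟨k, hk, hkz⟩⟩ := hwc v1' w2a w2b z0 (by rw [hw, hw2ab]; simp)
      have := Fin.lt_def.1 hkz
      rw [hzval] at this
      omega
    have hpc : Canonical (v1' ++ [z0]) := by
      apply canonical_prefix (a := v1' ++ [z0]) (b := w2)
      have hsh : w = (v1' ++ [z0]) ++ w2 := by rw [hw]; simp
      rwa [hsh] at hwc
    have hpre : ∀ w'', ¬ Step (v1' ++ [z0]) w'' := no_step_of_canonical hpc
    have hyy : ∀ x ∈ w2 ++ u, x ≠ z0 := by
      intro x hx
      rcases List.mem_append.1 hx with h1 | h1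
      · exact hw2 x h1
      · exact hne_iff x (hu0 x h1)
    obtain ⟨z, hzc, hzm, hrtg⟩ :=
      reduce_tail hpre hvne hmin (w2 ++ u).length (w2 ++ u) le_rfl hyy
    have hshape2 : w ++ u = v1' ++ z0 :: (w2 ++ u) := by rw [hw]; simp
    have hrtg2 : Relation.ReflTransGen Step (w ++ u) (v1' ++ z0 :: z) := by
      rw [hshape2]
      exact hrtg
    have heq2 : v1' ++ z0 :: z = v1 ++ z0 :: v2 := by
      apply canonical_unique hzc hc'
      exact Relation.EqvGen.trans _ _ _
        (Relation.EqvGen.symm _ _ (rtg_eqvgen hrtg2)) he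
    have hz0v1 : z0 ∉ v1 := fun hx => (hv1 z0 hx) hzval
    obtain ⟨hv1eq, -⟩ := unique_split heq2 hv1' hz0v1
    refine ⟨w2, ?_, ?_⟩
    · intro i hi hival
      exact hw2 i hi (Fin.ext (by rw [hival, hzval]))
    · rw [hw, hv1eq]
  · exfalso
    obtain ⟨zz, hrtg, hzc, hzm⟩ := reduce_to_canonical (w ++ u).length (w ++ u) le_rfl
    have heq2 : zz = v1 ++ z0 :: v2 := canonical_unique hzc hc'
      (Relation.EqvGen.trans _ _ _ (Relation.EqvGen.symm _ _ (rtg_eqvgen hrtg)) he)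
    have hzin : z0 ∈ zz := by rw [heq2]; simp
    rcases List.mem_append.1 (hzm _ hzin) with h1 | h1
    · exact h0 h1
    · exact hu0 _ h1 hzval
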